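/- State-dependent threshold structure of the optimal change detector (core of Theorem 2): let W(p,x) := lim_{k→∞} (B^k ψ)(p,x) be the pointwise limit of the Bellman iterates of ψ. Then for each x ∈ S there exists a unique p°(x) ∈ (0,1) such that λ(1−p°(x)) = p°(x) + Σ_{x'∈S} P(x'|p°(x),x)·W(Φ(x',x,p°(x)), x'); moreover, for every p ∈ [0,1], W(p,x) = λ(1−p) if and only if p ≥ p°(x). -/

import Mathlib

/-!
Each Bellman iterate of `ψ` is concave in `p`: it is the minimum of the affine stopping cost and
of `p` plus a nonnegative combination of perspective transforms
`(p̄ L + 1 - p̄) V(p̄ L / (p̄ L + 1 - p̄))` of concave functions. Concavity passes to the limit `W`,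
which is a fixed point of `B`. Hence the gap `D(p) := λ(1-p) - p - Σ P(x'|p,x) W(Φ(x',x,p), x')`
between stopping and continuing is convex on `[0,1]`. From `0 ≤ W(p,x) ≤ λ(1-p)` one gets
`D(p) ≥ λρ(1-p) - p`, positive for small `p`, and `D(1) ≤ -1`. A convex function with these signs
has exactly one zero `p°` in `(0,1)`, is positive before it and negative after it, and
`W(p,x) = λ(1-p)` exactly when `D(p) ≤ 0`.
-/

open Finset Filter Topology

noncomputable section

/-- `p̄ = p + ρ(1-p)`, the predicted change probability. -/
def pbar (ρ p : ℝ) : ℝ := p + ρ * (1 - p)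

/-- Likelihood ratio `L(x',x) = Q₂(x'|x) / Q₁(x'|x)`. -/
def likeRatio {S : Type*} (Q1 Q2 : S → S → ℝ) (x' x : S) : ℝ := Q2 x x' / Q1 x x'

/-- Bayesian posterior update `Φ(x',x,p)`. -/
def post {S : Type*} (Q1 Q2 : S → S → ℝ) (ρ : ℝ) (x' x : S) (p : ℝ) : ℝ :=
  pbar ρ p * likeRatio Q1 Q2 x' x / (pbar ρ p * likeRatio Q1 Q2 x' x + (1 - pbar ρ p))

/-- Predictive probability `P(x'|p,x)`. -/
def pred {S : Type*} (Q1 Q2 : S → S → ℝ) (ρ : ℝ) (x' : S) (p : ℝ) (x : S) : ℝ :=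
  (1 - pbar ρ p) * Q1 x x' + pbar ρ p * Q2 x x'

/-- The Bellman operator `B`. -/
def bell {S : Type*} [Fintype S] (Q1 Q2 : S → S → ℝ) (ρ lam : ℝ)
    (V : ℝ → S → ℝ) : ℝ → S → ℝ :=
  fun p x => min (lam * (1 - p))
    (p + ∑ x' : S, pred Q1 Q2 ρ x' p x * V (post Q1 Q2 ρ x' x p) x')

/-- The stopping cost `ψ(p,x) = λ(1-p)`. -/
def psi (S : Type*) (lam : ℝ) : ℝ → S → ℝ := fun p _ => lam * (1 - p)

open Set

theorem ConcaveOn.finset_sum {E ι : Type*} [AddCommMonoid E] [Module ℝ E] {s : Set E}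
    (hs : Convex ℝ s) (t : Finset ι) {f : ι → E → ℝ} (hf : ∀ i ∈ t, ConcaveOn ℝ s (f i)) :
    ConcaveOn ℝ s (fun x => ∑ i ∈ t, f i x) := by
  classical
  induction t using Finset.induction_on with
  | empty => simpa using concaveOn_const (0 : ℝ) hs
  | insert i t hi ih =>
    simp only [Finset.sum_insert hi]
    exact (hf i (Finset.mem_insert_self i t)).add
      (ih fun j hj => hf j (Finset.mem_insert_of_mem hj))

theorem ConcaveOn.of_tendsto {E ι : Type*} [AddCommMonoid E] [Module ℝ E] {l : Filter ι}
    [l.NeBot] {s : Set E} {f : ι → E → ℝ} {g : E → ℝ} (hf : ∀ i, ConcaveOn ℝ s (f i))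
    (hg : ∀ x ∈ s, Tendsto (fun i => f i x) l (𝓝 (g x))) : ConcaveOn ℝ s g := by
  obtain ⟨i⟩ := Filter.nonempty_of_neBot l
  refine ⟨(hf i).1, fun x hx y hy a b ha hb hab => ?_⟩
  exact le_of_tendsto_of_tendsto' (((hg x hx).const_smul a).add ((hg y hy).const_smul b))
    (hg _ ((hf i).1 hx hy ha hb hab)) fun j => (hf j).2 hx hy ha hb hab

theorem ConcaveOn.perspective {E : Type*} [AddCommGroup E] [Module ℝ E] {s : Set ℝ}
    {t : Set E} {V : ℝ → ℝ} (hV : ConcaveOn ℝ s V) (ht : Convex ℝ t) (n d : E →ᵃ[ℝ] ℝ)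
    (hd : ∀ u ∈ t, 0 < d u) (hnd : ∀ u ∈ t, n u / d u ∈ s) :
    ConcaveOn ℝ t (fun u => d u * V (n u / d u)) := by
  refine ⟨ht, fun x hx y hy a b ha hb hab => ?_⟩
  have hdx := hd x hx
  have hdy := hd y hy
  set D := a * d x + b * d y
  have hd_combo : d (a • x + b • y) = D := Convex.combo_affine_apply hab
  have hn_combo : n (a • x + b • y) = a * n x + b * n y := Convex.combo_affine_apply hab
  have hD : 0 < D := hd_combo ▸ hd _ (ht hx hy ha hb hab)
  have hwx : 0 ≤ a * d x / D := div_nonneg (mul_nonneg ha hdx.le) hD.le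
  have hwy : 0 ≤ b * d y / D := div_nonneg (mul_nonneg hb hdy.le) hD.le
  have hw : a * d x / D + b * d y / D = 1 := (add_div _ _ _).symm.trans (div_self hD.ne')
  have hV_combo := hV.2 (hnd x hx) (hnd y hy) hwx hwy hw
  have hratio : n (a • x + b • y) / d (a • x + b • y)
      = a * d x / D * (n x / d x) + b * d y / D * (n y / d y) := by
    rw [hn_combo, hd_combo]
    field_simp
  simp only [smul_eq_mul] at hV_combo ⊢
  rw [hratio, hd_combo]
  calc a * (d x * V (n x / d x)) + b * (d y * V (n y / d y))
      = D * (a * d x / D * V (n x / d x) + b * d y / D * V (n y / d y)) := by field_simp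
    _ ≤ _ := mul_le_mul_of_nonneg_left hV_combo hD.le

theorem ConvexOn.neg_of_nonpos_of_lt {D : ℝ → ℝ} (hD : ConvexOn ℝ (Icc 0 1) D) (hD1 : D 1 < 0)
    {q p : ℝ} (hq : q ∈ Icc (0 : ℝ) 1) (hp : p ∈ Icc (0 : ℝ) 1) (hqp : q < p) (hDq : D q ≤ 0) :
    D p < 0 := by
  have h1q : 0 < 1 - q := by linarith [hp.2]
  set t := (p - q) / (1 - q)
  have ht0 : 0 < t := div_pos (by linarith) h1q
  have ht1 : t ≤ 1 := (div_le_one h1q).2 (by linarith [hp.2])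
  have hcombo : (1 - t) • q + t • (1 : ℝ) = p := by
    simp only [smul_eq_mul, t]
    field_simp
    ring
  have hconv := hD.2 hq (right_mem_Icc.2 zero_le_one) (by linarith : 0 ≤ 1 - t) ht0.le
    (by ring : 1 - t + t = 1)
  rw [hcombo, smul_eq_mul, smul_eq_mul] at hconv
  nlinarith

theorem ConvexOn.exists_threshold {D : ℝ → ℝ} (hD : ConvexOn ℝ (Icc 0 1) D) {a : ℝ}
    (ha : a ∈ Ioo (0 : ℝ) 1) (hDa : 0 < D a) (hD1 : D 1 < 0) :
    ∃ p0 ∈ Ioo (0 : ℝ) 1, ∀ p ∈ Icc (0 : ℝ) 1, (D p = 0 ↔ p = p0) ∧ (D p ≤ 0 ↔ p0 ≤ p) := by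
  obtain ⟨b, hab, hb1, hDb⟩ : ∃ b, a ≤ b ∧ b < 1 ∧ D b < 0 := by
    -- at weight `s` on `1` the chord from `(a, D a)` to `(1, D 1)` vanishes; go halfway beyond
    set s := D a / (D a - D 1)
    have hs0 : 0 ≤ s := div_nonneg hDa.le (by linarith)
    have hs1 : s < 1 := (div_lt_one (by linarith)).2 (by linarith)
    set t := (s + 1) / 2
    have ht0 : 0 < t := by simp only [t]; linarith
    have ht1 : t < 1 := by simp only [t]; linarith
    have hchord : (1 - t) * D a + t * D 1 = D 1 / 2 := by
      have : D a - D 1 ≠ 0 := by linarith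
      simp only [t, s]
      field_simp
      ring
    have hconv := hD.2 (Ioo_subset_Icc_self ha) (right_mem_Icc.2 zero_le_one)
      (by linarith : 0 ≤ 1 - t) ht0.le (by ring : 1 - t + t = 1)
    simp only [smul_eq_mul, mul_one] at hconv
    exact ⟨(1 - t) * a + t, by nlinarith [ha.2], by nlinarith [ha.2], by linarith⟩
  have hcont : ContinuousOn D (Icc a b) := by
    have h := hD.continuousOn_interior
    rw [interior_Icc] at h
    exact h.mono fun p hp => ⟨ha.1.trans_le hp.1, hp.2.trans_lt hb1⟩
  obtain ⟨p0, hp0, hDp0⟩ := intermediate_value_Icc' hab hcont ⟨hDb.le, hDa.le⟩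
  have hp0' : p0 ∈ Ioo (0 : ℝ) 1 := ⟨ha.1.trans_le hp0.1, hp0.2.trans_lt hb1⟩
  refine ⟨p0, hp0', fun p hp => ?_⟩
  rcases lt_trichotomy p p0 with h | rfl | h
  · have hDp : 0 < D p := lt_of_not_ge fun hDp =>
      (hD.neg_of_nonpos_of_lt hD1 hp (Ioo_subset_Icc_self hp0') h hDp).ne hDp0
    exact ⟨iff_of_false hDp.ne' h.ne, iff_of_false hDp.not_ge h.not_ge⟩
  · simp [hDp0]
  · have hDp := hD.neg_of_nonpos_of_lt hD1 (Ioo_subset_Icc_self hp0') hp h hDp0.le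
    exact ⟨iff_of_false hDp.ne h.ne', iff_of_true hDp.le h.le⟩

theorem mul_add_one_sub_pos {u L : ℝ} (hu : u ∈ Icc (0 : ℝ) 1) (hL : 0 < L) :
    0 < u * L + (1 - u) := by
  rcases hu.2.lt_or_eq with hu1 | rfl
  · nlinarith [hu.1]
  · linarith

section BayesianQuickestDetection

variable {S : Type*} {Q1 Q2 : S → S → ℝ} {ρ lam : ℝ}

theorem pbar_mem_Icc (hρ : ρ ∈ Icc (0 : ℝ) 1) {p : ℝ} (hp : p ∈ Icc (0 : ℝ) 1) :
    pbar ρ p ∈ Icc (0 : ℝ) 1 := by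
  obtain ⟨hρ0, hρ1⟩ := hρ
  obtain ⟨hp0, hp1⟩ := hp
  constructor <;> unfold pbar <;> nlinarith

theorem likeRatio_pos (hQ1 : ∀ x x', 0 < Q1 x x') (hQ2 : ∀ x x', 0 < Q2 x x') (x' x : S) :
    0 < likeRatio Q1 Q2 x' x :=
  div_pos (hQ2 x x') (hQ1 x x')

theorem post_mem_Icc (hQ1 : ∀ x x', 0 < Q1 x x') (hQ2 : ∀ x x', 0 < Q2 x x')
    (hρ : ρ ∈ Icc (0 : ℝ) 1) {p : ℝ} (hp : p ∈ Icc (0 : ℝ) 1) (x' x : S) :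
    post Q1 Q2 ρ x' x p ∈ Icc (0 : ℝ) 1 := by
  have hu := pbar_mem_Icc hρ hp
  have hL := likeRatio_pos hQ1 hQ2 x' x
  have hden := mul_add_one_sub_pos hu hL
  exact ⟨div_nonneg (mul_nonneg hu.1 hL.le) hden.le,
    (div_le_one hden).2 (by linarith [hu.2])⟩

theorem pred_eq {x' x : S} (h : Q1 x x' ≠ 0) (p : ℝ) :
    pred Q1 Q2 ρ x' p x
      = Q1 x x' * (pbar ρ p * likeRatio Q1 Q2 x' x + (1 - pbar ρ p)) := by
  unfold pred likeRatio
  field_simp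
  ring

theorem pred_nonneg (hQ1 : ∀ x x', 0 < Q1 x x') (hQ2 : ∀ x x', 0 < Q2 x x')
    (hρ : ρ ∈ Icc (0 : ℝ) 1) {p : ℝ} (hp : p ∈ Icc (0 : ℝ) 1) (x' x : S) :
    0 ≤ pred Q1 Q2 ρ x' p x := by
  rw [pred_eq (hQ1 x x').ne']
  exact mul_nonneg (hQ1 x x').le
    (mul_add_one_sub_pos (pbar_mem_Icc hρ hp) (likeRatio_pos hQ1 hQ2 x' x)).le

theorem pred_mul_one_sub_post (hQ1 : ∀ x x', 0 < Q1 x x') (hQ2 : ∀ x x', 0 < Q2 x x')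
    (hρ : ρ ∈ Icc (0 : ℝ) 1) {p : ℝ} (hp : p ∈ Icc (0 : ℝ) 1) (x' x : S) :
    pred Q1 Q2 ρ x' p x * (1 - post Q1 Q2 ρ x' x p) = (1 - pbar ρ p) * Q1 x x' := by
  have hden := mul_add_one_sub_pos (pbar_mem_Icc hρ hp) (likeRatio_pos hQ1 hQ2 x' x)
  rw [pred_eq (hQ1 x x').ne', post]
  field_simp
  ring

variable [Fintype S]

def continuationValue (Q1 Q2 : S → S → ℝ) (ρ : ℝ) (V : ℝ → S → ℝ) (p : ℝ) (x : S) : ℝ :=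
  ∑ x' : S, pred Q1 Q2 ρ x' p x * V (post Q1 Q2 ρ x' x p) x'

theorem bell_apply (V : ℝ → S → ℝ) (p : ℝ) (x : S) :
    bell Q1 Q2 ρ lam V p x = min (lam * (1 - p)) (p + continuationValue Q1 Q2 ρ V p x) :=
  rfl

theorem concaveOn_continuationValue (hQ1 : ∀ x x', 0 < Q1 x x') (hQ2 : ∀ x x', 0 < Q2 x x')
    (hρ : ρ ∈ Icc (0 : ℝ) 1) {V : ℝ → S → ℝ}
    (hV : ∀ x', ConcaveOn ℝ (Icc 0 1) (fun p => V p x')) (x : S) :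
    ConcaveOn ℝ (Icc 0 1) (fun p => continuationValue Q1 Q2 ρ V p x) := by
  refine ConcaveOn.finset_sum (convex_Icc 0 1) _ fun x' _ => ?_
  set L := likeRatio Q1 Q2 x' x
  -- numerator and denominator of `post` are affine in `p`
  let n : ℝ →ᵃ[ℝ] ℝ := AffineMap.lineMap (ρ * L) L
  let d : ℝ →ᵃ[ℝ] ℝ := AffineMap.lineMap (ρ * L + (1 - ρ)) L
  have hn : ∀ p, n p = pbar ρ p * L := fun p => by
    simp only [n, AffineMap.lineMap_apply_ring, pbar]
    ring
  have hd : ∀ p, d p = pbar ρ p * L + (1 - pbar ρ p) := fun p => by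
    simp only [d, AffineMap.lineMap_apply_ring, pbar]
    ring
  have hpersp : ConcaveOn ℝ (Icc 0 1) (fun p => d p * V (n p / d p) x') :=
    (hV x').perspective (convex_Icc 0 1) n d
      (fun p hp => hd p ▸ mul_add_one_sub_pos (pbar_mem_Icc hρ hp) (likeRatio_pos hQ1 hQ2 x' x))
      (fun p hp => by rw [hn, hd]; exact post_mem_Icc hQ1 hQ2 hρ hp x' x)
  refine (hpersp.smul (hQ1 x x').le).congr fun p _ => ?_
  simp only [pred_eq (hQ1 x x').ne', post, hn, hd, smul_eq_mul]
  ring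

theorem continuationValue_nonneg (hQ1 : ∀ x x', 0 < Q1 x x') (hQ2 : ∀ x x', 0 < Q2 x x')
    (hρ : ρ ∈ Icc (0 : ℝ) 1) {V : ℝ → S → ℝ} (hV : ∀ p ∈ Icc (0 : ℝ) 1, ∀ x, 0 ≤ V p x)
    {p : ℝ} (hp : p ∈ Icc (0 : ℝ) 1) (x : S) :
    0 ≤ continuationValue Q1 Q2 ρ V p x :=
  Finset.sum_nonneg fun x' _ =>
    mul_nonneg (pred_nonneg hQ1 hQ2 hρ hp x' x) (hV _ (post_mem_Icc hQ1 hQ2 hρ hp x' x) x')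

theorem continuationValue_le (hQ1 : ∀ x x', 0 < Q1 x x') (hQ2 : ∀ x x', 0 < Q2 x x')
    (hQ1row : ∀ x, ∑ x', Q1 x x' = 1) (hρ : ρ ∈ Icc (0 : ℝ) 1) {V : ℝ → S → ℝ}
    (hV : ∀ p ∈ Icc (0 : ℝ) 1, ∀ x, V p x ≤ lam * (1 - p)) {p : ℝ} (hp : p ∈ Icc (0 : ℝ) 1)
    (x : S) :
    continuationValue Q1 Q2 ρ V p x ≤ lam * (1 - pbar ρ p) := by
  calc continuationValue Q1 Q2 ρ V p x
      ≤ ∑ x' : S, pred Q1 Q2 ρ x' p x * (lam * (1 - post Q1 Q2 ρ x' x p)) :=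
        Finset.sum_le_sum fun x' _ => mul_le_mul_of_nonneg_left
          (hV _ (post_mem_Icc hQ1 hQ2 hρ hp x' x) x') (pred_nonneg hQ1 hQ2 hρ hp x' x)
    _ = lam * (1 - pbar ρ p) * ∑ x' : S, Q1 x x' := by
        rw [Finset.mul_sum]
        refine Finset.sum_congr rfl fun x' _ => ?_
        rw [mul_left_comm, pred_mul_one_sub_post hQ1 hQ2 hρ hp]
        ring
    _ = lam * (1 - pbar ρ p) := by rw [hQ1row, mul_one]

theorem concaveOn_stopCost (lam : ℝ) {s : Set ℝ} (hs : Convex ℝ s) :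
    ConcaveOn ℝ s (fun p => lam * (1 - p)) :=
  ⟨hs, fun _ _ _ _ _ _ _ _ hab =>
    le_of_eq (by simp only [smul_eq_mul]; linear_combination lam * hab)⟩

theorem convexOn_stopCost (lam : ℝ) {s : Set ℝ} (hs : Convex ℝ s) :
    ConvexOn ℝ s (fun p => lam * (1 - p)) :=
  ⟨hs, fun _ _ _ _ _ _ _ _ hab =>
    le_of_eq (by simp only [smul_eq_mul]; linear_combination (-lam) * hab)⟩

theorem concaveOn_iterate_bell (hQ1 : ∀ x x', 0 < Q1 x x') (hQ2 : ∀ x x', 0 < Q2 x x')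
    (hρ : ρ ∈ Icc (0 : ℝ) 1) (k : ℕ) (x : S) :
    ConcaveOn ℝ (Icc 0 1) (fun p => ((bell Q1 Q2 ρ lam)^[k] (psi S lam)) p x) := by
  induction k generalizing x with
  | zero => exact concaveOn_stopCost lam (convex_Icc 0 1)
  | succ k ih =>
    simp only [Function.iterate_succ_apply']
    exact (concaveOn_stopCost lam (convex_Icc 0 1)).inf
      ((concaveOn_id (convex_Icc 0 1)).add (concaveOn_continuationValue hQ1 hQ2 hρ ih x))

theorem iterate_bell_nonneg (hQ1 : ∀ x x', 0 < Q1 x x') (hQ2 : ∀ x x', 0 < Q2 x x')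
    (hρ : ρ ∈ Icc (0 : ℝ) 1) (hlam : 0 ≤ lam) (k : ℕ) :
    ∀ p ∈ Icc (0 : ℝ) 1, ∀ x, 0 ≤ ((bell Q1 Q2 ρ lam)^[k] (psi S lam)) p x := by
  induction k with
  | zero => exact fun p hp _ => mul_nonneg hlam (sub_nonneg.2 hp.2)
  | succ k ih =>
    intro p hp x
    rw [Function.iterate_succ_apply', bell_apply]
    exact le_min (mul_nonneg hlam (sub_nonneg.2 hp.2))
      (add_nonneg hp.1 (continuationValue_nonneg hQ1 hQ2 hρ ih hp x))

variable {W : ℝ → S → ℝ}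

theorem concaveOn_of_tendsto_iterate_bell
    (hW : ∀ p ∈ Icc (0 : ℝ) 1, ∀ x : S,
      Tendsto (fun k : ℕ => ((bell Q1 Q2 ρ lam)^[k] (psi S lam)) p x) atTop (𝓝 (W p x)))
    (hQ1 : ∀ x x', 0 < Q1 x x') (hQ2 : ∀ x x', 0 < Q2 x x') (hρ : ρ ∈ Icc (0 : ℝ) 1) (x : S) :
    ConcaveOn ℝ (Icc 0 1) (fun p => W p x) :=
  ConcaveOn.of_tendsto (fun k => concaveOn_iterate_bell hQ1 hQ2 hρ k x) fun p hp => hW p hp x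

theorem nonneg_of_tendsto_iterate_bell
    (hW : ∀ p ∈ Icc (0 : ℝ) 1, ∀ x : S,
      Tendsto (fun k : ℕ => ((bell Q1 Q2 ρ lam)^[k] (psi S lam)) p x) atTop (𝓝 (W p x)))
    (hQ1 : ∀ x x', 0 < Q1 x x') (hQ2 : ∀ x x', 0 < Q2 x x') (hρ : ρ ∈ Icc (0 : ℝ) 1)
    (hlam : 0 ≤ lam) :
    ∀ p ∈ Icc (0 : ℝ) 1, ∀ x, 0 ≤ W p x :=
  fun p hp x => ge_of_tendsto' (hW p hp x) fun k => iterate_bell_nonneg hQ1 hQ2 hρ hlam k p hp x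

theorem eq_bell_of_tendsto_iterate_bell
    (hW : ∀ p ∈ Icc (0 : ℝ) 1, ∀ x : S,
      Tendsto (fun k : ℕ => ((bell Q1 Q2 ρ lam)^[k] (psi S lam)) p x) atTop (𝓝 (W p x)))
    (hQ1 : ∀ x x', 0 < Q1 x x') (hQ2 : ∀ x x', 0 < Q2 x x') (hρ : ρ ∈ Icc (0 : ℝ) 1)
    {p : ℝ} (hp : p ∈ Icc (0 : ℝ) 1) (x : S) : W p x = bell Q1 Q2 ρ lam W p x := by
  have hcont : Tendsto
      (fun k => continuationValue Q1 Q2 ρ ((bell Q1 Q2 ρ lam)^[k] (psi S lam)) p x)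
      atTop (𝓝 (continuationValue Q1 Q2 ρ W p x)) :=
    tendsto_finsetSum _ fun x' _ => (hW _ (post_mem_Icc hQ1 hQ2 hρ hp x' x) x').const_mul _
  refine tendsto_nhds_unique ((hW p hp x).comp (tendsto_add_atTop_nat 1)) ?_
  simp only [Function.comp_def, Function.iterate_succ_apply', bell_apply]
  exact tendsto_const_nhds.min (hcont.const_add p)

def stoppingGap (Q1 Q2 : S → S → ℝ) (ρ lam : ℝ) (V : ℝ → S → ℝ) (x : S) (p : ℝ) : ℝ :=
  lam * (1 - p) - (p + continuationValue Q1 Q2 ρ V p x)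

theorem convexOn_stoppingGap (hQ1 : ∀ x x', 0 < Q1 x x') (hQ2 : ∀ x x', 0 < Q2 x x')
    (hρ : ρ ∈ Icc (0 : ℝ) 1) {V : ℝ → S → ℝ}
    (hV : ∀ x', ConcaveOn ℝ (Icc 0 1) (fun p => V p x')) (x : S) :
    ConvexOn ℝ (Icc 0 1) (stoppingGap Q1 Q2 ρ lam V x) :=
  (convexOn_stopCost lam (convex_Icc 0 1)).sub
    ((concaveOn_id (convex_Icc 0 1)).add (concaveOn_continuationValue hQ1 hQ2 hρ hV x))

theorem stoppingGap_one_neg (hQ1 : ∀ x x', 0 < Q1 x x') (hQ2 : ∀ x x', 0 < Q2 x x')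
    (hρ : ρ ∈ Icc (0 : ℝ) 1) {V : ℝ → S → ℝ} (hV : ∀ p ∈ Icc (0 : ℝ) 1, ∀ x, 0 ≤ V p x)
    (x : S) : stoppingGap Q1 Q2 ρ lam V x 1 < 0 := by
  have := continuationValue_nonneg hQ1 hQ2 hρ hV (right_mem_Icc.2 zero_le_one) x
  rw [stoppingGap]
  linarith

theorem exists_stoppingGap_pos (hQ1 : ∀ x x', 0 < Q1 x x') (hQ2 : ∀ x x', 0 < Q2 x x')
    (hQ1row : ∀ x, ∑ x', Q1 x x' = 1) (hρ : ρ ∈ Ioo (0 : ℝ) 1) (hlam : 0 < lam)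
    {V : ℝ → S → ℝ} (hV : ∀ p ∈ Icc (0 : ℝ) 1, ∀ x, V p x ≤ lam * (1 - p)) (x : S) :
    ∃ a ∈ Ioo (0 : ℝ) 1, 0 < stoppingGap Q1 Q2 ρ lam V x a := by
  -- the gap at `a` is at least `λρ(1-a) - a`, which is `λρ/2` at this `a`
  have hlamρ : 0 < lam * ρ := mul_pos hlam hρ.1
  set a := lam * ρ / (2 * (1 + lam * ρ))
  have ha_eq : a * (1 + lam * ρ) = lam * ρ / 2 := by
    simp only [a]
    field_simp
  have ha : a ∈ Ioo (0 : ℝ) 1 := ⟨by positivity, by nlinarith⟩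
  have hG := continuationValue_le hQ1 hQ2 hQ1row (Ioo_subset_Icc_self hρ) hV
    (Ioo_subset_Icc_self ha) x
  rw [pbar] at hG
  exact ⟨a, ha, by rw [stoppingGap]; nlinarith⟩

end BayesianQuickestDetection

theorem stmt_14_general {S : Type*} [Fintype S]
    (Q1 Q2 : S → S → ℝ)
    (hQ1pos : ∀ x x', 0 < Q1 x x') (hQ2pos : ∀ x x', 0 < Q2 x x')
    (hQ1row : ∀ x, ∑ x', Q1 x x' = 1)
    (ρ : ℝ) (hρ : ρ ∈ Set.Ioo (0 : ℝ) 1)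
    (lam : ℝ) (hlam : 0 < lam)
    (W : ℝ → S → ℝ)
    (hW : ∀ p ∈ Set.Icc (0 : ℝ) 1, ∀ x : S,
        Filter.Tendsto (fun k : ℕ => ((bell Q1 Q2 ρ lam)^[k] (psi S lam)) p x)
          Filter.atTop (nhds (W p x))) :
    ∀ x : S, ∃ p0 ∈ Set.Ioo (0 : ℝ) 1,
      (lam * (1 - p0)
        = p0 + ∑ x' : S, pred Q1 Q2 ρ x' p0 x * W (post Q1 Q2 ρ x' x p0) x') ∧
      (∀ q ∈ Set.Ioo (0 : ℝ) 1,
        lam * (1 - q)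
          = q + ∑ x' : S, pred Q1 Q2 ρ x' q x * W (post Q1 Q2 ρ x' x q) x' → q = p0) ∧
      (∀ p ∈ Set.Icc (0 : ℝ) 1, (W p x = lam * (1 - p) ↔ p0 ≤ p)) := by
  have hρ' : ρ ∈ Icc (0 : ℝ) 1 := Ioo_subset_Icc_self hρ
  have hWfix := fun p (hp : p ∈ Icc (0 : ℝ) 1) =>
    eq_bell_of_tendsto_iterate_bell hW hQ1pos hQ2pos hρ' hp
  have hWnonneg := nonneg_of_tendsto_iterate_bell hW hQ1pos hQ2pos hρ' hlam.le
  have hWle : ∀ p ∈ Icc (0 : ℝ) 1, ∀ x, W p x ≤ lam * (1 - p) :=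
    fun p hp x => (hWfix p hp x).trans_le (min_le_left _ _)
  intro x
  obtain ⟨a, ha, hDa⟩ := exists_stoppingGap_pos hQ1pos hQ2pos hQ1row hρ hlam hWle x
  obtain ⟨p0, hp0, hsign⟩ := (convexOn_stoppingGap hQ1pos hQ2pos hρ'
    (concaveOn_of_tendsto_iterate_bell hW hQ1pos hQ2pos hρ') x).exists_threshold ha hDa
    (stoppingGap_one_neg hQ1pos hQ2pos hρ' hWnonneg x)
  have hstop : ∀ p ∈ Icc (0 : ℝ) 1,
      W p x = lam * (1 - p) ↔ stoppingGap Q1 Q2 ρ lam W x p ≤ 0 := fun p hp => by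
    rw [hWfix p hp x, bell_apply, min_eq_left_iff, stoppingGap, sub_nonpos]
  refine ⟨p0, hp0, ?_, fun q hq hq0 => ?_, fun p hp => (hstop p hp).trans (hsign p hp).2⟩
  · exact sub_eq_zero.1 ((hsign p0 (Ioo_subset_Icc_self hp0)).1.2 rfl)
  · exact (hsign q (Ioo_subset_Icc_self hq)).1.1 (sub_eq_zero.2 hq0)

theorem stmt_14 {S : Type*} [Fintype S] [Nonempty S]
    (Q1 Q2 : S → S → ℝ)
    (hQ1pos : ∀ x x', 0 < Q1 x x') (hQ2pos : ∀ x x', 0 < Q2 x x')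
    (hQ1row : ∀ x, ∑ x', Q1 x x' = 1) (hQ2row : ∀ x, ∑ x', Q2 x x' = 1)
    (ρ : ℝ) (hρ : ρ ∈ Set.Ioo (0 : ℝ) 1)
    (lam : ℝ) (hlam : 0 < lam)
    (W : ℝ → S → ℝ)
    (hW : ∀ p ∈ Set.Icc (0 : ℝ) 1, ∀ x : S,
        Filter.Tendsto (fun k : ℕ => ((bell Q1 Q2 ρ lam)^[k] (psi S lam)) p x)
          Filter.atTop (nhds (W p x))) :
    ∀ x : S, ∃ p0 ∈ Set.Ioo (0 : ℝ) 1,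
      (lam * (1 - p0)
        = p0 + ∑ x' : S, pred Q1 Q2 ρ x' p0 x * W (post Q1 Q2 ρ x' x p0) x') ∧
      (∀ q ∈ Set.Ioo (0 : ℝ) 1,
        lam * (1 - q)
          = q + ∑ x' : S, pred Q1 Q2 ρ x' q x * W (post Q1 Q2 ρ x' x q) x' → q = p0) ∧
      (∀ p ∈ Set.Icc (0 : ℝ) 1, (W p x = lam * (1 - p) ↔ p0 ≤ p)) :=
  stmt_14_general Q1 Q2 hQ1pos hQ2pos hQ1row ρ hρ lam hlam W hW
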